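/- The set of 3-dimensional ℂ-linear subspaces W ⊆ ℂ⁶ such that every vector (z₁,…,z₆) ∈ W satisfies z₁³ + z₂³ + z₃³ + z₄³ + z₅³ + z₆³ = 0 has exactly 405 elements. Equivalently, the Fermat cubic fourfold X_F = {z₁³ + ⋯ + z₆³ = 0} ⊂ ℙ⁵ contains exactly 405 planes. -/

import Mathlib

/-!
A subspace `W ⊆ ℂ⁶` lies in the Fermat cubic iff the polar form `T(x, y, z) = ∑ xᵢ yᵢ zᵢ`
vanishes on `W`. Choose coordinates `I` onto which `W` projects isomorphically and let `e_r ∈ W`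
(`r ∈ I`) restrict to `δ_r` on `I`. Evaluating `T(e_r, e_s, v)` shows that `W` also projects
isomorphically onto the complementary coordinates `J`, and that the restrictions of the `e_r` to
`J` have pairwise disjoint supports; as `|J| = |I|`, each `e_r` is supported on a pair `{r, j}`,
and `T(e_r, e_r, v) = 0` then reads `v_j = e_r(j) v_r` with `e_r(j)³ = -1`. So `W` is one of the
planes `z_{f i} = c_i z_i`, where `f` is a fixed-point-free involution of the six coordinates
(`15` choices) and the `c_i` are cube roots of `-1` with `c_{f i} c_i = 1` (`3³ = 27` choices).
-/

open Finset Function Module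

theorem Finset.card_eq_one_of_pairwiseDisjoint {α β : Type*} [DecidableEq β]
    {s : Finset α} {t : Finset β} {S : α → Finset β} (hne : ∀ a ∈ s, (S a).Nonempty)
    (hsub : ∀ a ∈ s, S a ⊆ t) (hdisj : (s : Set α).PairwiseDisjoint S) (hcard : #t ≤ #s) :
    ∀ a ∈ s, #(S a) = 1 := by
  have hle : ∑ a ∈ s, #(S a) ≤ ∑ a ∈ s, 1 := by
    rw [← card_biUnion hdisj, sum_const, smul_eq_mul, mul_one]
    exact (card_le_card (biUnion_subset.2 hsub)).trans hcard
  have hone := (sum_eq_sum_iff_of_le fun a ha => (hne a ha).card_pos).1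
    (le_antisymm (sum_le_sum fun a ha => (hne a ha).card_pos) hle)
  exact fun a ha => (hone a ha).symm

section Transversal

variable {ι M : Type*} [LinearOrder ι] {f : ι → ι}

theorem Function.Involutive.two_mul_card_lt_apply [Fintype ι] (hf : Involutive f)
    (hfix : ∀ i, f i ≠ i) : 2 * Fintype.card {i // i < f i} = Fintype.card ι := by
  have hswap : Fintype.card {i // i < f i} = Fintype.card {i // ¬ i < f i} :=
    Fintype.card_congr <| hf.toPerm.subtypeEquiv fun i => by
      simp only [Involutive.coe_toPerm, hf i, not_lt]
      exact ⟨le_of_lt, fun h => lt_of_le_of_ne h (hfix i).symm⟩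
  have hle := Fintype.card_subtype_le fun i => i < f i
  rw [Fintype.card_subtype_compl] at hswap
  omega

theorem Function.Involutive.bijective_restrict_lt_apply (hf : Involutive f)
    (hfix : ∀ i, f i ≠ i) {σ : ι → M → M} (hσ : ∀ i x, σ i (σ (f i) x) = x) :
    Bijective fun (g : {g : ι → M // ∀ i, g (f i) = σ i (g i)}) (t : {i // i < f i}) =>
      g.1 t := by
  have hlt : ∀ i, ¬ i < f i → f i < f (f i) := fun i hi => by
    rw [hf i]
    exact lt_of_le_of_ne (not_lt.1 hi) (hfix i)
  constructor
  · rintro ⟨g, hg⟩ ⟨g', hg'⟩ h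
    refine Subtype.ext (funext fun i => ?_)
    by_cases hi : i < f i
    · exact congrFun h ⟨i, hi⟩
    · change g i = g' i
      rw [← hf i, hg, hg', show g (f i) = g' (f i) from congrFun h ⟨f i, hlt i hi⟩]
  · intro h
    classical
    refine ⟨⟨fun i => if hi : i < f i then h ⟨i, hi⟩ else σ (f i) (h ⟨f i, hlt i hi⟩),
      fun i => ?_⟩, funext fun t => dif_pos t.2⟩
    by_cases hi : i < f i
    · simp [hi, hf i, not_lt.2 hi.le]
    · simp [hi, hlt i hi, hσ]

end Transversal

variable {K ι : Type*} [Field K] [Fintype ι]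

def IsFermatIsotropic (W : Submodule K (ι → K)) : Prop :=
  ∀ x ∈ W, ∀ y ∈ W, ∀ z ∈ W, ∑ i, x i * y i * z i = 0

theorem isFermatIsotropic_iff_sum_pow_three [CharZero K] {W : Submodule K (ι → K)} :
    IsFermatIsotropic W ↔ ∀ z ∈ W, ∑ i, z i ^ 3 = 0 := by
  refine ⟨fun hW z hz => by simpa only [← pow_three'] using hW z hz z hz z hz,
    fun hW x hx y hy z hz => ?_⟩
  have polarization : 6 * ∑ i, x i * y i * z i =
      ∑ i, (x + y + z) i ^ 3 - ∑ i, (x + y) i ^ 3 - ∑ i, (x + z) i ^ 3 - ∑ i, (y + z) i ^ 3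
        + ∑ i, x i ^ 3 + ∑ i, y i ^ 3 + ∑ i, z i ^ 3 := by
    simp only [mul_sum, ← sum_sub_distrib, ← sum_add_distrib, Pi.add_apply]
    exact sum_congr rfl fun i _ => by ring
  rw [hW _ (add_mem (add_mem hx hy) hz), hW _ (add_mem hx hy), hW _ (add_mem hx hz),
    hW _ (add_mem hy hz), hW x hx, hW y hy, hW z hz] at polarization
  simpa using polarization

/-- `W` projects isomorphically onto the coordinates in `I`. -/
def IsGraphOver (W : Submodule K (ι → K)) (I : Finset ι) : Prop :=
  #I = finrank K W ∧ ∀ z ∈ W, (∀ i ∈ I, z i = 0) → z = 0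

variable {W : Submodule K (ι → K)} {I : Finset ι}

omit [Fintype ι] in
theorem injective_restrict_of_eq_zero (hsep : ∀ z ∈ W, (∀ i ∈ I, z i = 0) → z = 0) :
    Injective ((LinearMap.funLeft K K ((↑) : I → ι)).comp W.subtype) := by
  rw [← LinearMap.ker_eq_bot, LinearMap.ker_eq_bot']
  exact fun z hz => Subtype.ext (hsep z z.2 fun i hi => congrFun hz ⟨i, hi⟩)

theorem IsGraphOver.exists_mem_eqOn (hI : IsGraphOver W I) (g : ι → K) :
    ∃ z ∈ W, ∀ i ∈ I, z i = g i := by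
  obtain ⟨z, hz⟩ := (LinearMap.injective_iff_surjective_of_finrank_eq_finrank
    (by simp [hI.1])).1 (injective_restrict_of_eq_zero hI.2) fun i => g i
  exact ⟨z, z.2, fun i hi => congrFun hz ⟨i, hi⟩⟩

theorem exists_isGraphOver (W : Submodule K (ι → K)) : ∃ I : Finset ι, IsGraphOver W I := by
  classical
  let ℓ : ι → Dual K W := fun i => (LinearMap.proj i).comp W.subtype
  obtain ⟨κ, a, ha, hspan, hli⟩ := exists_linearIndependent' K ℓ
  have : Fintype κ := Fintype.ofInjective a ha
  have hsep : ∀ z ∈ W, (∀ i ∈ univ.map ⟨a, ha⟩, z i = 0) → z = 0 := by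
    intro z hz hzI
    have hker : Submodule.span K (Set.range ℓ) ≤ LinearMap.ker (Dual.eval K W ⟨z, hz⟩) := by
      rw [← hspan, Submodule.span_le]
      rintro _ ⟨k, rfl⟩
      exact hzI (a k) (mem_map_of_mem _ (mem_univ k))
    funext i
    exact hker (Submodule.subset_span ⟨i, rfl⟩)
  refine ⟨univ.map ⟨a, ha⟩, le_antisymm ?_ ?_, hsep⟩
  · simpa [Subspace.dual_finrank_eq] using hli.fintype_card_le_finrank
  · have := LinearMap.finrank_le_finrank_of_injective (injective_restrict_of_eq_zero hsep)
    rwa [finrank_fintype_fun_eq_card, Fintype.card_coe] at this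

theorem IsFermatIsotropic.ite_add_sum_compl_eq_zero [DecidableEq ι] (hW : IsFermatIsotropic W)
    {e e' v : ι → K} (he : e ∈ W) (he' : e' ∈ W) (hv : v ∈ W) {r s : ι} (hr : r ∈ I)
    (her : ∀ i ∈ I, e i = (Pi.single r 1 : ι → K) i)
    (hes : ∀ i ∈ I, e' i = (Pi.single s 1 : ι → K) i) :
    (if r = s then v r else 0) + ∑ j ∈ Iᶜ, e j * e' j * v j = 0 := by
  have h := hW e he e' he' v hv
  rw [← sum_add_sum_compl I,
    sum_eq_single_of_mem r hr fun i hi hir => by simp [her i hi, hir]] at h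
  convert h using 2
  simp [her r hr, hes r hr, Pi.single_apply]

theorem IsGraphOver.compl [DecidableEq ι] (hW : IsFermatIsotropic W)
    (hcard : Fintype.card ι = 2 * finrank K W) (hI : IsGraphOver W I) : IsGraphOver W Iᶜ := by
  refine ⟨by rw [card_compl, hI.1]; omega, fun v hv hvIc => hI.2 v hv fun r hr => ?_⟩
  obtain ⟨e, he, heI⟩ := hI.exists_mem_eqOn (Pi.single r 1)
  have h := hW.ite_add_sum_compl_eq_zero he he hv hr heI heI
  rwa [if_pos rfl, sum_eq_zero fun j hj => by rw [hvIc j hj, mul_zero], add_zero] at h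

theorem IsFermatIsotropic.apply_mul_apply_eq_zero [DecidableEq ι] (hW : IsFermatIsotropic W)
    (hIc : IsGraphOver W Iᶜ) {e e' : ι → K} (he : e ∈ W) (he' : e' ∈ W) {r s : ι}
    (hr : r ∈ I) (hrs : r ≠ s) (her : ∀ i ∈ I, e i = (Pi.single r 1 : ι → K) i)
    (hes : ∀ i ∈ I, e' i = (Pi.single s 1 : ι → K) i) {j : ι} (hj : j ∉ I) :
    e j * e' j = 0 := by
  obtain ⟨v, hv, hvIc⟩ := hIc.exists_mem_eqOn (Pi.single j 1)
  have h := hW.ite_add_sum_compl_eq_zero he he' hv hr her hes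
  rwa [if_neg hrs, zero_add, sum_eq_single_of_mem j (mem_compl.2 hj) fun k hk hkj => by
    simp [hvIc k hk, hkj], hvIc j (mem_compl.2 hj), Pi.single_eq_same, mul_one] at h

theorem IsGraphOver.exists_supported_pair (hW : IsFermatIsotropic W)
    (hcard : Fintype.card ι = 2 * finrank K W) (hI : IsGraphOver W I) {r : ι} (hr : r ∈ I) :
    ∃ j ≠ r, ∃ z ∈ W, z r = 1 ∧ ∀ k, k ≠ r → k ≠ j → z k = 0 := by
  classical
  have hIc := hI.compl hW hcard
  choose e he heI using fun s => hI.exists_mem_eqOn (Pi.single s 1)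
  let S s := Iᶜ.filter (e s · ≠ 0)
  have hne : ∀ s ∈ I, (S s).Nonempty := by
    intro s hs
    by_contra hempty
    have h0 := hIc.2 (e s) (he s) fun j hj => by
      by_contra hj0
      exact hempty ⟨j, mem_filter.2 ⟨hj, hj0⟩⟩
    simpa [h0] using heI s s hs
  have hdisj : (I : Set ι).PairwiseDisjoint S := by
    intro s hs s' hs' hss'
    refine disjoint_left.2 fun j hj hj' => ?_
    obtain ⟨hjI, hj0⟩ := mem_filter.1 hj
    exact mul_ne_zero hj0 (mem_filter.1 hj').2 <| hW.apply_mul_apply_eq_zero hIc (he s) (he s')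
      hs hss' (heI s) (heI s') (mem_compl.1 hjI)
  obtain ⟨j, hSj⟩ := card_eq_one.1 <| card_eq_one_of_pairwiseDisjoint hne
    (fun s _ => filter_subset _ _) hdisj (by rw [hIc.1, hI.1]) r hr
  have hjI : j ∉ I := mem_compl.1 (mem_filter.1 (hSj ▸ mem_singleton_self j)).1
  refine ⟨j, (ne_of_mem_of_not_mem hr hjI).symm, e r, he r, by simp [heI r r hr],
    fun k hkr hkj => ?_⟩
  by_cases hk : k ∈ I
  · simp [heI r k hk, hkr]
  · by_contra hk0
    exact hkj (mem_singleton.1 (hSj ▸ mem_filter.2 ⟨mem_compl.2 hk, hk0⟩))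

theorem IsFermatIsotropic.exists_supported_pair (hW : IsFermatIsotropic W)
    (hcard : Fintype.card ι = 2 * finrank K W) (i : ι) :
    ∃ j ≠ i, ∃ z ∈ W, z i = 1 ∧ ∀ k, k ≠ i → k ≠ j → z k = 0 := by
  classical
  obtain ⟨I, hI⟩ := exists_isGraphOver W
  by_cases hi : i ∈ I
  · exact hI.exists_supported_pair hW hcard hi
  · exact (hI.compl hW hcard).exists_supported_pair hW hcard (mem_compl.2 hi)

theorem IsFermatIsotropic.pow_three_eq_neg_one_and_apply_eq (hW : IsFermatIsotropic W)
    {z : ι → K} (hz : z ∈ W) {i j : ι} (hji : j ≠ i) (hzi : z i = 1)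
    (hsupp : ∀ k, k ≠ i → k ≠ j → z k = 0) :
    z j ^ 3 = -1 ∧ ∀ v ∈ W, v j = z j * v i := by
  have hsum : ∀ v : ι → K, ∑ k, z k * z k * v k = v i + z j ^ 2 * v j := fun v => by
    rw [Fintype.sum_eq_add i j hji.symm fun k hk => by simp [hsupp k hk.1 hk.2], hzi]
    ring
  have hcube : z j ^ 3 = -1 := by
    linear_combination (hsum z).symm.trans (hW z hz z hz z hz) - hzi
  refine ⟨hcube, fun v hv => ?_⟩
  linear_combination -z j * (hsum v).symm.trans (hW z hz z hz v hv) + v j * hcube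

def fermatPlane (f : ι → ι) (c : ι → K) : Submodule K (ι → K) where
  carrier := {z | ∀ i, z (f i) = c i * z i}
  add_mem' hx hy i := by simp only [Pi.add_apply, hx i, hy i, mul_add]
  zero_mem' i := by simp
  smul_mem' a z hz i := by simp only [Pi.smul_apply, hz i, smul_eq_mul]; ring

structure IsFermatPairing (f : ι → ι) (c : ι → K) : Prop where
  involutive : Involutive f
  apply_ne : ∀ i, f i ≠ i
  pow_three : ∀ i, c i ^ 3 = -1
  mul_eq_one : ∀ i, c (f i) * c i = 1

variable (ι K) in
def fermatPairings : Set (Equiv.Perm ι × (ι → K)) := {p | IsFermatPairing p.1 p.2}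

theorem IsFermatIsotropic.exists_isFermatPairing_le (hW : IsFermatIsotropic W)
    (hcard : Fintype.card ι = 2 * finrank K W) :
    ∃ f c, IsFermatPairing f c ∧ W ≤ fermatPlane f c := by
  choose f hf z hz hzi hsupp using hW.exists_supported_pair hcard
  choose hcube hrel using fun i =>
    hW.pow_three_eq_neg_one_and_apply_eq (hz i) (hf i) (hzi i) (hsupp i)
  -- `z (f i)` equals `1` at `f i`, so the relation for `i` forces `i` into its support.
  have hinv : Involutive f := fun i => by
    by_contra hffi
    have h := hrel i (z (f i)) (hz (f i))
    rw [hzi, hsupp (f i) i (hf i).symm (Ne.symm hffi), mul_zero] at h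
    exact one_ne_zero h
  refine ⟨f, fun i => z i (f i), ⟨hinv, hf, hcube, fun i => ?_⟩, fun v hv i => hrel i v hv⟩
  have h := hrel (f i) (z i) (hz i)
  rw [hinv i, hzi] at h
  rw [hinv i, ← h]

variable {f : ι → ι} {c : ι → K}

theorem IsFermatPairing.isFermatIsotropic (hp : IsFermatPairing f c) :
    IsFermatIsotropic (fermatPlane f c) := fun x hx y hy z hz =>
  sum_ninvolution f
    (fun i => by rw [hx i, hy i, hz i]; linear_combination (x i * y i * z i) * hp.pow_three i)
    (fun i _ => hp.apply_ne i) (fun i => mem_univ _) hp.involutive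

theorem IsFermatPairing.two_mul_finrank (hp : IsFermatPairing f c) :
    2 * finrank K (fermatPlane f c) = Fintype.card ι := by
  let _ : LinearOrder ι := LinearOrder.lift' _ (Fintype.equivFin ι).injective
  let ρ := (LinearMap.funLeft K K ((↑) : {i // i < f i} → ι)).comp (fermatPlane f c).subtype
  have hρ : Bijective ρ := hp.involutive.bijective_restrict_lt_apply hp.apply_ne
    (σ := fun i x => c i * x) fun i x => by
      rw [← mul_assoc, mul_comm (c i), hp.mul_eq_one, one_mul]
  rw [(LinearEquiv.ofBijective ρ hρ).finrank_eq, finrank_fintype_fun_eq_card,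
    hp.involutive.two_mul_card_lt_apply hp.apply_ne]

omit [Fintype ι] in
theorem IsFermatPairing.single_add_single_mem [DecidableEq ι] (hp : IsFermatPairing f c)
    (i : ι) : Pi.single i 1 + Pi.single (f i) (c i) ∈ fermatPlane f c := by
  intro k
  by_cases hki : k = i
  · subst hki
    simp [hp.apply_ne k]
  by_cases hkfi : k = f i
  · subst hkfi
    simp [hp.involutive i, hp.apply_ne i, hp.mul_eq_one i]
  have hfk : f k ≠ i := fun h => hkfi (h ▸ (hp.involutive k).symm)
  have hfkfi : f k ≠ f i := fun h => hki (hp.involutive.injective h)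
  simp [hki, hkfi, hfk, hfkfi]

omit [Fintype ι] in
theorem fermatPlane_injOn :
    Set.InjOn (fun p : Equiv.Perm ι × (ι → K) => fermatPlane p.1 p.2)
      (fermatPairings K ι) := by
  classical
  rintro ⟨f, c⟩ (hp : IsFermatPairing f c) ⟨f', c'⟩ (hp' : IsFermatPairing f' c')
    (h : fermatPlane f c = fermatPlane f' c')
  have key : ∀ i, f' i = f i ∧ c' i = c i := fun i => by
    have hmem := (h ▸ hp.single_add_single_mem i : _ ∈ fermatPlane f' c') i
    have hc' : c' i ≠ 0 := fun h0 => by simpa [h0] using hp'.pow_three i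
    have hff' : f' i = f i := by
      by_contra hne
      simp only [Pi.add_apply, hp'.apply_ne i, hne, hp.apply_ne i, Pi.single_eq_of_ne,
        Pi.single_eq_of_ne', Pi.single_eq_same, ne_eq, not_false_eq_true, add_zero,
        mul_one] at hmem
      exact hc' hmem.symm
    simp only [hff', Pi.add_apply, hp.apply_ne i, Pi.single_eq_of_ne, Pi.single_eq_same,
      Pi.single_eq_of_ne', ne_eq, not_false_eq_true, zero_add, add_zero, mul_one] at hmem
    exact ⟨hff', hmem.symm⟩
  simp only [Prod.mk.injEq]
  exact ⟨Equiv.ext fun i => (key i).1.symm, funext fun i => (key i).2.symm⟩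

theorem setOf_isFermatIsotropic_eq_image_fermatPlane :
    {W : Submodule K (ι → K) | 2 * finrank K W = Fintype.card ι ∧ IsFermatIsotropic W} =
      (fun p : Equiv.Perm ι × (ι → K) => fermatPlane p.1 p.2) '' fermatPairings K ι := by
  ext W
  constructor
  · rintro ⟨hcard, hW⟩
    obtain ⟨f, c, hp, hle⟩ := hW.exists_isFermatPairing_le hcard.symm
    refine ⟨(hp.involutive.toPerm f, c), hp, (Submodule.eq_of_le_of_finrank_eq hle ?_).symm⟩
    have := hp.two_mul_finrank
    omega
  · rintro ⟨⟨f, c⟩, hp, rfl⟩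
    exact ⟨hp.two_mul_finrank, hp.isFermatIsotropic⟩

theorem Complex.card_cube_roots_neg_one : Nat.card {x : ℂ // x ^ 3 = -1} = 3 := by
  have hζ := Complex.isPrimitiveRoot_exp 3 (by norm_num)
  rw [Nat.card_congr (Equiv.subtypeEquivRight fun x =>
      (Polynomial.mem_nthRootsFinset (by norm_num) (-1 : ℂ)).symm),
    Nat.card_eq_fintype_card, Fintype.card_coe, Polynomial.nthRootsFinset,
    Multiset.toFinset_card_of_nodup (hζ.nthRoots_nodup (by norm_num)), hζ.card_nthRoots,
    if_pos ⟨-1, by norm_num⟩]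

theorem card_isFermatPairing (hf : Involutive f) (hfix : ∀ i, f i ≠ i) :
    Nat.card {c : ι → ℂ // IsFermatPairing f c} = 3 ^ (Fintype.card ι / 2) := by
  let _ : LinearOrder ι := LinearOrder.lift' _ (Fintype.equivFin ι).injective
  let S := {x : ℂ // x ^ 3 = -1}
  let inv : S → S := fun x => ⟨x.1⁻¹, by rw [inv_pow, x.2, inv_neg, inv_one]⟩
  let e : {c : ι → ℂ // IsFermatPairing f c} ≃ {g : ι → S // ∀ i, g (f i) = inv (g i)} :=
    { toFun c := ⟨fun i => ⟨c.1 i, c.2.pow_three i⟩,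
        fun i => Subtype.ext (eq_inv_of_mul_eq_one_left (c.2.mul_eq_one i))⟩
      invFun g := ⟨fun i => g.1 i, hf, hfix, fun i => (g.1 i).2, fun i => by
        rw [g.2 i]
        exact inv_mul_cancel₀ fun h0 => by simpa [h0] using (g.1 i).2⟩
      left_inv _ := rfl
      right_inv _ := rfl }
  have hinv : ∀ (_ : ι) (x : S), inv (inv x) = x := fun _ x => Subtype.ext (inv_inv x.1)
  rw [Nat.card_congr <| e.trans <| Equiv.ofBijective _ (hf.bijective_restrict_lt_apply hfix hinv),
    Nat.card_fun, Complex.card_cube_roots_neg_one, Nat.card_eq_fintype_card,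
    ← hf.two_mul_card_lt_apply hfix, Nat.mul_div_cancel_left _ two_pos]

variable (ι) in
def fixedPointFreeInvolutions [DecidableEq ι] : Finset (Equiv.Perm ι) :=
  {f | ∀ i, f (f i) = i ∧ f i ≠ i}

theorem ncard_fermatPairings [DecidableEq ι] :
    (fermatPairings ℂ ι).ncard = #(fixedPointFreeInvolutions ι) * 3 ^ (Fintype.card ι / 2) := by
  let P (f : Equiv.Perm ι) : Prop := ∀ i, f (f i) = i ∧ f i ≠ i
  let e : fermatPairings ℂ ι ≃ Σ f : {f // P f}, {c : ι → ℂ // IsFermatPairing f.1 c} :=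
    { toFun p := ⟨⟨p.1.1, fun i => ⟨p.2.involutive i, p.2.apply_ne i⟩⟩, p.1.2, p.2⟩
      invFun q := ⟨(q.1.1, q.2.1), q.2.2⟩
      left_inv _ := rfl
      right_inv _ := rfl }
  have hfiber (f : {f // P f}) : Nat.card {c : ι → ℂ // IsFermatPairing f.1 c} =
      3 ^ (Fintype.card ι / 2) :=
    card_isFermatPairing (fun i => (f.2 i).1) fun i => (f.2 i).2
  have (f : {f // P f}) : Finite {c : ι → ℂ // IsFermatPairing f.1 c} :=
    Nat.finite_of_card_ne_zero (by rw [hfiber]; positivity)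
  rw [← Nat.card_coe_set_eq, Nat.card_congr e, Nat.card_sigma,
    sum_congr rfl fun f _ => hfiber f, sum_const, card_univ, Fintype.card_subtype, smul_eq_mul]
  rfl

theorem card_fixedPointFreeInvolutions_fin_six : #(fixedPointFreeInvolutions (Fin 6)) = 15 := by
  decide

theorem fermat_cubic_fourfold_has_405_planes :
    {W : Submodule ℂ (Fin 6 → ℂ) |
      Module.finrank ℂ W = 3 ∧ ∀ z ∈ W, ∑ i, z i ^ 3 = 0}.ncard = 405 := by
  have hset : {W : Submodule ℂ (Fin 6 → ℂ) | finrank ℂ W = 3 ∧ ∀ z ∈ W, ∑ i, z i ^ 3 = 0} =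
      {W : Submodule ℂ (Fin 6 → ℂ) | 2 * finrank ℂ W = Fintype.card (Fin 6) ∧
        IsFermatIsotropic W} := by
    ext W
    simp only [Set.mem_ofPred_eq, isFermatIsotropic_iff_sum_pow_three, Fintype.card_fin]
    exact and_congr_left' (by omega)
  rw [hset, setOf_isFermatIsotropic_eq_image_fermatPlane, fermatPlane_injOn.ncard_image,
    ncard_fermatPairings, card_fixedPointFreeInvolutions_fin_six, Fintype.card_fin]
  rfl
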